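/- In any CBI-model with any environment and element r, r satisfies F −∗ G if and only if r satisfies ∼G −∗ ∼F (contraposition for the multiplicative implication). -/
import Mathlib


structure CBIModel (R : Type*) where
  op : R → R → Set R
  e : R
  neg : R → R
  inf : R
  comm : ∀ x y, op x y = op y x
  assoc : ∀ x y z w : R, (∃ v ∈ op x y, w ∈ op v z) ↔ ∃ v ∈ op y z, w ∈ op x v
  unit : ∀ x, op x e = {x}
  inf_mem : ∀ x, inf ∈ op x (neg x)
  neg_unique : ∀ x y, inf ∈ op x y → y = neg x

inductive Formula (V : Type*) : Type _
  | var : V → Formula V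
  | top : Formula V
  | bot : Formula V
  | not : Formula V → Formula V
  | and : Formula V → Formula V → Formula V
  | or : Formula V → Formula V → Formula V
  | imp : Formula V → Formula V → Formula V
  | mtop : Formula V
  | mbot : Formula V
  | mneg : Formula V → Formula V
  | star : Formula V → Formula V → Formula V
  | par : Formula V → Formula V → Formula V
  | wand : Formula V → Formula V → Formula V

def sat {R V : Type*} (M : CBIModel R) (ρ : V → Set R) : R → Formula V → Prop
  | r, Formula.var p => r ∈ ρ p
  | _, Formula.top => True
  | _, Formula.bot => False
  | r, Formula.not F => ¬ sat M ρ r F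
  | r, Formula.and F G => sat M ρ r F ∧ sat M ρ r G
  | r, Formula.or F G => sat M ρ r F ∨ sat M ρ r G
  | r, Formula.imp F G => sat M ρ r F → sat M ρ r G
  | r, Formula.mtop => r = M.e
  | r, Formula.mbot => r ≠ M.inf
  | r, Formula.mneg F => ¬ sat M ρ (M.neg r) F
  | r, Formula.star F G => ∃ r₁ r₂, r ∈ M.op r₁ r₂ ∧ sat M ρ r₁ F ∧ sat M ρ r₂ G
  | r, Formula.par F G =>
      ∀ r₁ r₂, M.neg r ∈ M.op r₁ r₂ → sat M ρ (M.neg r₁) F ∨ sat M ρ (M.neg r₂) G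
  | r, Formula.wand F G =>
      ∀ r' r'', r'' ∈ M.op r r' → sat M ρ r' F → sat M ρ r'' G

theorem CBIModel.neg_neg {R : Type*} (M : CBIModel R) (x : R) : M.neg (M.neg x) = x := by
  have h := M.inf_mem x
  rw [M.comm] at h
  exact (M.neg_unique _ _ h).symm

theorem CBIModel.rotate' {R : Type*} (M : CBIModel R) {x y z : R} (h : z ∈ M.op x y) :
    M.neg x ∈ M.op y (M.neg z) := by
  obtain ⟨v, hv, hinf⟩ := (M.assoc x y (M.neg z) M.inf).mp ⟨z, h, M.inf_mem z⟩
  rwa [← M.neg_unique x v hinf]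

theorem CBIModel.rotate {R : Type*} (M : CBIModel R) {x y z : R} (h : z ∈ M.op x y) :
    M.neg y ∈ M.op x (M.neg z) := by
  have h1 := M.rotate' h
  have h2 := M.rotate' h1
  rwa [M.neg_neg, M.comm] at h2

theorem sat_wand_contrapose {R V : Type*} (M : CBIModel R) (ρ : V → Set R) (r : R)
    (F G : Formula V) :
    sat M ρ r (Formula.wand F G) ↔
      sat M ρ r (Formula.wand (Formula.mneg G) (Formula.mneg F)) := by
  simp only [sat]
  constructor
  · intro H r' r'' hmem hnG hF
    exact hnG (H (M.neg r'') (M.neg r') (M.rotate hmem) hF)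
  · intro H r' r'' hmem hF
    by_contra hnG
    have := H (M.neg r'') (M.neg r') (M.rotate hmem)
    rw [M.neg_neg, M.neg_neg] at this
    exact this hnG hF
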